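/- Let d ≥ 2 be an integer, p > 0, and let E ⊆ C_p^d be a set such that for each i ∈ ℕ the intersection of E with the sphere of radius i^{-p} centred at the origin is a finite set of cardinality b_i. If liminf_{n→∞} #{1 ≤ i ≤ n : b_i > 0}/n > 0, then lodim_θ(E) ≥ θ/(p+θ) for all θ ∈ (0,1]; and if limsup_{n→∞} #{1 ≤ i ≤ n : b_i > 0}/n > 0, then updim_θ(E) ≥ θ/(p+θ) for all θ ∈ (0,1]. -/

import Mathlib

open Set Metric Filter

/-- The upper θ-intermediate dimension of a set `E` in a metric space:
the infimum of all `s ≥ 0` such that for every `ε > 0` there is `δ₀ > 0` such that for all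
`0 < δ < δ₀` there is a countable cover `𝒰` of `E` with `δ ≤ diam U ≤ δ ^ θ` for all `U ∈ 𝒰`
and `∑_{U ∈ 𝒰} (diam U) ^ s ≤ ε`. -/
noncomputable def updim {X : Type*} [PseudoMetricSpace X] (θ : ℝ) (E : Set X) : ℝ :=
  sInf {s : ℝ | 0 ≤ s ∧ ∀ ε : ℝ, 0 < ε → ∃ δ₀ : ℝ, 0 < δ₀ ∧ ∀ δ : ℝ, 0 < δ → δ < δ₀ →
    ∃ 𝒰 : Set (Set X), 𝒰.Countable ∧ E ⊆ ⋃₀ 𝒰 ∧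
      (∀ U ∈ 𝒰, δ ≤ diam U ∧ diam U ≤ δ ^ θ) ∧
      ∑' U : 𝒰, ENNReal.ofReal (diam (U : Set X) ^ s) ≤ ENNReal.ofReal ε}

/-- The lower θ-intermediate dimension of a set `E` in a metric space. -/
noncomputable def lodim {X : Type*} [PseudoMetricSpace X] (θ : ℝ) (E : Set X) : ℝ :=
  sInf {s : ℝ | 0 ≤ s ∧ ∀ ε : ℝ, 0 < ε → ∀ δ₀ : ℝ, 0 < δ₀ → ∃ δ : ℝ, 0 < δ ∧ δ < δ₀ ∧
    ∃ 𝒰 : Set (Set X), 𝒰.Countable ∧ E ⊆ ⋃₀ 𝒰 ∧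
      (∀ U ∈ 𝒰, δ ≤ diam U ∧ diam U ≤ δ ^ θ) ∧
      ∑' U : 𝒰, ENNReal.ofReal (diam (U : Set X) ^ s) ≤ ENNReal.ofReal ε}

/-- `C_p^d`: the union over `n ≥ 1` of the spheres in `ℝ^d` of radius `n^{-p}` centred at
the origin. -/
noncomputable def concentric (d : ℕ) (p : ℝ) : Set (EuclideanSpace ℝ (Fin d)) :=
  {x | ∃ n : ℕ, 1 ≤ n ∧ ‖x‖ = (n : ℝ) ^ (-p)}

/-!
The upper bounds are soft: `E` lies in the unit ball, which is covered by `≍ δ^{-d}` balls of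
diameter `δ`, so the exponent `d + 1` is admissible and both infima are over nonempty sets.

For the lower bound fix `s < θ/(p+θ)` and `t` with `s < t`, `t p < θ (1 - s)`, and look at scales
`δ` with `n ≍ δ^{-t}`. The radii `i^{-p}`, `i ≤ n`, are `g = p n^{-(p+1)}`-separated, so a set `U`
with `δ ≤ |U| ≤ δ^θ` meets at most `1 + |U|/g` of them; choosing one point of `E` on each occupied
sphere and spreading `|U|^s` over the chosen points in `U` gives each at least
`min(δ^s, g δ^{θ(s-1)})/2`. When `c n` of the
first `n` spheres are occupied, the total is `≳ min(δ^{s-t}, δ^{tp - θ(1-s)}) → ∞`, so no such cover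
has cost `≤ 1`. A positive lower density does this at every small scale (against `lodim`), a
positive upper density at arbitrarily small scales (against `updim`).
-/

open Topology

def HasIntermediateCover {X : Type*} [PseudoMetricSpace X] (E : Set X) (θ δ s ε : ℝ) : Prop :=
  ∃ 𝒰 : Set (Set X), 𝒰.Countable ∧ E ⊆ ⋃₀ 𝒰 ∧
    (∀ U ∈ 𝒰, δ ≤ diam U ∧ diam U ≤ δ ^ θ) ∧
    ∑' U : 𝒰, ENNReal.ofReal (diam (U : Set X) ^ s) ≤ ENNReal.ofReal ε

section IntermediateDimension

variable {X : Type*} [PseudoMetricSpace X] {E F : Set X} {θ δ s ε a : ℝ}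

lemma HasIntermediateCover.mono (h : HasIntermediateCover F θ δ s ε) (hEF : E ⊆ F) :
    HasIntermediateCover E θ δ s ε :=
  let ⟨𝒰, h𝒰, hcov, hdiam, hsum⟩ := h
  ⟨𝒰, h𝒰, hEF.trans hcov, hdiam, hsum⟩

lemma updim_eq_sInf : updim θ E =
    sInf {s | 0 ≤ s ∧ ∀ ε > 0, ∀ᶠ δ in 𝓝[>] 0, HasIntermediateCover E θ δ s ε} := by
  simp only [(nhdsGT_basis (0 : ℝ)).eventually_iff, mem_Ioo, and_imp]
  rfl

lemma lodim_eq_sInf : lodim θ E =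
    sInf {s | 0 ≤ s ∧ ∀ ε > 0, ∃ᶠ δ in 𝓝[>] 0, HasIntermediateCover E θ δ s ε} := by
  simp only [(nhdsGT_basis (0 : ℝ)).frequently_iff, mem_Ioo, and_assoc]
  rfl

lemma le_updim (hne : ∃ s₀, 0 ≤ s₀ ∧ ∀ ε > 0, ∀ᶠ δ in 𝓝[>] 0, HasIntermediateCover E θ δ s₀ ε)
    (h : ∀ s, 0 ≤ s → s < a → ∃ᶠ δ in 𝓝[>] 0, ¬ HasIntermediateCover E θ δ s 1) :
    a ≤ updim θ E := by
  rw [updim_eq_sInf]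
  refine le_csInf hne fun s ⟨hs, hcov⟩ => le_of_not_gt fun hsa => ?_
  obtain ⟨δ, hnot, hδ⟩ := ((h s hs hsa).and_eventually (hcov 1 one_pos)).exists
  exact hnot hδ

lemma le_lodim (hne : ∃ s₀, 0 ≤ s₀ ∧ ∀ ε > 0, ∀ᶠ δ in 𝓝[>] 0, HasIntermediateCover E θ δ s₀ ε)
    (h : ∀ s, 0 ≤ s → s < a → ∀ᶠ δ in 𝓝[>] 0, ¬ HasIntermediateCover E θ δ s 1) :
    a ≤ lodim θ E := by
  rw [lodim_eq_sInf]
  obtain ⟨s₀, hs₀, hcov₀⟩ := hne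
  refine le_csInf ⟨s₀, hs₀, fun ε hε => (hcov₀ ε hε).frequently⟩
    fun s ⟨hs, hcov⟩ => le_of_not_gt fun hsa => ?_
  obtain ⟨δ, hδ, hnot⟩ := ((hcov 1 one_pos).and_eventually (h s hs hsa)).exists
  exact hnot hδ

end IntermediateDimension

lemma exists_finset_closedBall_cover {d : ℕ} {h : ℝ} (hh : 0 < h) (hh1 : h ≤ 1) :
    ∃ C : Finset (EuclideanSpace ℝ (Fin d)),
      closedBall 0 1 ⊆ ⋃ c ∈ C, closedBall c (√d * h) ∧ (C.card : ℝ) ≤ (5 / h) ^ d := by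
  classical
  set M : ℤ := ⌈1 / h⌉
  set K := Fintype.piFinset fun _ : Fin d => Finset.Icc (-M) M
  set center : (Fin d → ℤ) → EuclideanSpace ℝ (Fin d) := fun k => WithLp.toLp 2 fun j => h * k j
  refine ⟨K.image center, fun x hx => ?_, ?_⟩
  · have hxj : ∀ j, |x j| ≤ 1 := fun j =>
      (PiLp.norm_apply_le x j).trans (mem_closedBall_zero_iff.mp hx)
    set k : Fin d → ℤ := fun j => ⌊x j / h⌋
    have hk : k ∈ K := Fintype.mem_piFinset.mpr fun j => by
      have hxh : |x j / h| ≤ 1 / h := by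
        rw [abs_div, abs_of_pos hh]; gcongr; exact hxj j
      obtain ⟨hlo, hhi⟩ := abs_le.mp hxh
      refine Finset.mem_Icc.mpr
        ⟨Int.le_floor.mpr ?_, (Int.floor_le_floor hhi).trans (Int.floor_le_ceil _)⟩
      push_cast
      linarith [Int.le_ceil (1 / h)]
    refine mem_biUnion (Finset.mem_coe.mpr (Finset.mem_image_of_mem center hk)) ?_
    have hcoord : ∀ j, dist (x j) (h * k j) ≤ h := fun j => by
      have h₁ := Int.floor_le (x j / h)
      have h₂ := Int.lt_floor_add_one (x j / h)
      rw [Real.dist_eq, abs_le]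
      constructor <;> nlinarith [mul_le_mul_of_nonneg_left h₁ hh.le,
        mul_lt_mul_of_pos_left h₂ hh, mul_div_cancel₀ (x j) hh.ne']
    rw [mem_closedBall, EuclideanSpace.dist_eq]
    calc √(∑ j, dist (x j) (center k j) ^ 2) ≤ √(∑ _j : Fin d, h ^ 2) := by
          gcongr with j
          exact hcoord j
      _ = √d * h := by
          rw [Finset.sum_const, Finset.card_univ, Fintype.card_fin, nsmul_eq_mul,
            Real.sqrt_mul (Nat.cast_nonneg d), Real.sqrt_sq hh.le]
  · have hM : (M : ℝ) ≤ 1 / h + 1 := (Int.ceil_lt_add_one _).le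
    have hM0 : 0 ≤ M := Int.ceil_nonneg (by positivity)
    have hcard : (K.card : ℝ) = (2 * M + 1 : ℝ) ^ d := by
      rw [Fintype.card_piFinset, Finset.prod_const, Finset.card_univ, Fintype.card_fin,
        Int.card_Icc, Nat.cast_pow]
      congr 1
      have : ((M + 1 - -M).toNat : ℤ) = 2 * M + 1 :=
        (Int.toNat_of_nonneg (by omega)).trans (by ring)
      exact_mod_cast this
    calc ((K.image center).card : ℝ) ≤ K.card := by exact_mod_cast Finset.card_image_le
      _ = (2 * M + 1 : ℝ) ^ d := hcard
      _ ≤ (5 / h) ^ d := by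
          have : (1 : ℝ) ≤ 1 / h := by rw [le_div_iff₀ hh]; linarith
          gcongr
          calc (2 * M + 1 : ℝ) ≤ 2 * (1 / h + 1) + 1 := by linarith
            _ ≤ 5 / h := by rw [show (5 : ℝ) / h = 5 * (1 / h) by ring]; linarith

lemma eventually_hasIntermediateCover_closedBall {d : ℕ} (hd : 0 < d) {θ ε : ℝ} (hθ : θ ≤ 1)
    (hε : 0 < ε) : ∀ᶠ δ in 𝓝[>] 0,
      HasIntermediateCover (closedBall (0 : EuclideanSpace ℝ (Fin d)) 1) θ δ (d + 1) ε := by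
  classical
  have : Nonempty (Fin d) := ⟨⟨0, hd⟩⟩
  have hsqrt : 1 ≤ √(d : ℝ) := Real.one_le_sqrt.mpr (by exact_mod_cast hd)
  filter_upwards [Ioo_mem_nhdsGT (show (0 : ℝ) < min 1 (ε / (10 * √d) ^ d) by positivity)]
    with δ ⟨hδ, hδA⟩
  have hδ1 : δ ≤ 1 := hδA.le.trans (min_le_left _ _)
  set h := δ / (2 * √d)
  have hh : 0 < h := by positivity
  obtain ⟨C, hcov, hcard⟩ := exists_finset_closedBall_cover (d := d) hh
    (by rw [div_le_one (by positivity)]; linarith)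
  have hr : √d * h = δ / 2 := by simp only [h]; field_simp
  set T := C.image fun c => closedBall c (δ / 2)
  have hdiam : ∀ U ∈ T, diam U = δ := fun U hU => by
    obtain ⟨c, -, rfl⟩ := Finset.mem_image.mp hU
    rw [diam_closedBall_eq c (by positivity)]
    ring
  refine ⟨T, T.countable_toSet, fun x hx => ?_, fun U hU => ?_, ?_⟩
  · obtain ⟨c, hc, hxc⟩ := mem_iUnion₂.mp (hcov hx)
    exact ⟨_, Finset.mem_image_of_mem _ hc, hr ▸ hxc⟩
  · rw [hdiam U hU]
    exact ⟨le_rfl, Real.self_le_rpow_of_le_one hδ.le hδ1 hθ⟩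
  · rw [Finset.tsum_subtype' T fun U => ENNReal.ofReal (diam U ^ ((d : ℝ) + 1)),
      ← ENNReal.ofReal_sum_of_nonneg fun U _ => by positivity]
    refine ENNReal.ofReal_le_ofReal ?_
    calc ∑ U ∈ T, diam U ^ ((d : ℝ) + 1) = T.card * δ ^ (d + 1) := by
          rw [Finset.sum_congr rfl fun U hU => by rw [hdiam U hU], Finset.sum_const,
            nsmul_eq_mul]
          norm_cast
      _ ≤ (5 / h) ^ d * δ ^ (d + 1) := by
          gcongr
          exact (Nat.cast_le.mpr Finset.card_image_le).trans hcard
      _ = (10 * √d) ^ d * δ := by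
          rw [show 5 / h = 10 * √d / δ by simp only [h]; field_simp; ring, div_pow, pow_succ]
          field_simp
      _ ≤ ε := by
          have := hδA.trans_le (min_le_right _ _)
          rw [lt_div_iff₀ (by positivity), mul_comm] at this
          exact this.le

lemma concentric_subset_closedBall (d : ℕ) {p : ℝ} (hp : 0 < p) :
    concentric d p ⊆ closedBall 0 1 := by
  rintro x ⟨n, hn, hx⟩
  rw [mem_closedBall_zero_iff, hx]
  exact Real.rpow_le_one_of_one_le_of_nonpos (by exact_mod_cast hn) (by linarith)

lemma sub_mul_le_rpow_neg_sub_rpow_neg {p a b N : ℝ} (hp : 0 < p) (ha : 0 < a) (hab : a ≤ b)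
    (hbN : b ≤ N) : (b - a) * (p * N ^ (-(p + 1))) ≤ a ^ (-p) - b ^ (-p) := by
  have hderiv : ∀ x ∈ interior (Icc a N),
      deriv (fun x : ℝ => x ^ (-p)) x ≤ -(p * N ^ (-(p + 1))) := by
    rw [interior_Icc]
    rintro x ⟨hax, hxN⟩
    have hx : 0 < x := ha.trans hax
    rw [Real.deriv_rpow_const, show -p - 1 = -(p + 1) by ring, neg_mul, neg_le_neg_iff]
    exact mul_le_mul_of_nonneg_left
      (Real.rpow_le_rpow_of_nonpos hx hxN.le (by linarith)) hp.le
  have hcont : ContinuousOn (fun x : ℝ => x ^ (-p)) (Icc a N) := fun x hx =>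
    (Real.continuousAt_rpow_const _ _ (Or.inl (ha.trans_le hx.1).ne')).continuousWithinAt
  have hdiff : DifferentiableOn ℝ (fun x : ℝ => x ^ (-p)) (interior (Icc a N)) := fun x hx =>
    (Real.differentiableAt_rpow_const_of_ne _
      (ha.trans (interior_Icc (a := a) (b := N) ▸ hx).1).ne').differentiableWithinAt
  have := (convex_Icc a N).image_sub_le_mul_sub_of_deriv_le hcont hdiff hderiv a
    ⟨le_rfl, hab.trans hbN⟩ b ⟨hab, hbN⟩ hab
  linarith

lemma card_sub_one_mul_le_diam {X : Type*} [PseudoMetricSpace X] {x : ℕ → X} {U : Set X}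
    {F : Finset ℕ} {g : ℝ} (hU : Bornology.IsBounded U) (hg : 0 ≤ g) (hxU : ∀ i ∈ F, x i ∈ U)
    (hsep : ∀ i ∈ F, ∀ j ∈ F, i ≤ j → ((j : ℝ) - i) * g ≤ dist (x i) (x j)) :
    ((F.card : ℝ) - 1) * g ≤ diam U := by
  rcases F.eq_empty_or_nonempty with rfl | hF
  · simp only [Finset.card_empty, Nat.cast_zero]
    nlinarith [diam_nonneg (s := U)]
  have hcard : (F.card : ℝ) - 1 ≤ (F.max' hF : ℝ) - F.min' hF := by
    have h := Finset.card_le_card (t := Finset.Icc (F.min' hF) (F.max' hF)) fun i hi =>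
      Finset.mem_Icc.mpr ⟨F.min'_le i hi, F.le_max' i hi⟩
    rw [Nat.card_Icc] at h
    have h' : (F.card : ℝ) ≤ ((F.max' hF + 1 - F.min' hF : ℕ) : ℝ) := by exact_mod_cast h
    rw [Nat.cast_sub (by have := F.min'_le _ (F.max'_mem hF); omega), Nat.cast_add,
      Nat.cast_one] at h'
    linarith
  calc ((F.card : ℝ) - 1) * g ≤ ((F.max' hF : ℝ) - F.min' hF) * g :=
        mul_le_mul_of_nonneg_right hcard hg
    _ ≤ dist (x (F.min' hF)) (x (F.max' hF)) :=
        hsep _ (F.min'_mem hF) _ (F.max'_mem hF) (F.min'_le _ (F.max'_mem hF))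
    _ ≤ diam U := dist_le_diam_of_mem hU (hxU _ (F.min'_mem hF)) (hxU _ (F.max'_mem hF))

lemma mul_le_rpow_of_sub_one_mul_le {k g δ D θ s m : ℝ} (hg : 0 < g) (hδ : 0 < δ)
    (hδD : δ ≤ D) (hDδ : D ≤ δ ^ θ) (hs0 : 0 ≤ s) (hs1 : s ≤ 1) (hm : 0 ≤ m)
    (hm₁ : 2 * m ≤ δ ^ s) (hm₂ : 2 * m ≤ g * δ ^ (θ * (s - 1))) (hk : (k - 1) * g ≤ D) :
    k * m ≤ D ^ s := by
  have hD : 0 < D := hδ.trans_le hδD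
  rcases le_or_gt D g with hDg | hgD
  · have hk2 : k ≤ 2 := by nlinarith
    calc k * m ≤ 2 * m := mul_le_mul_of_nonneg_right hk2 hm
      _ ≤ δ ^ s := hm₁
      _ ≤ D ^ s := Real.rpow_le_rpow hδ.le hδD hs0
  · have hk2 : k * g ≤ 2 * D := by nlinarith
    have hδD' : δ ^ (θ * (s - 1)) ≤ D ^ (s - 1) := by
      rw [Real.rpow_mul hδ.le]
      exact Real.rpow_le_rpow_of_nonpos hD hDδ (by linarith)
    calc k * m = k * g * m / g := by field_simp
      _ ≤ 2 * D * m / g := by gcongr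
      _ = D * (2 * m) / g := by ring
      _ ≤ D * (g * δ ^ (θ * (s - 1))) / g := by gcongr
      _ = D * δ ^ (θ * (s - 1)) := by field_simp
      _ ≤ D * D ^ (s - 1) := by gcongr
      _ = D ^ s := by rw [Real.rpow_sub_one hD.ne']; field_simp

lemma ofReal_card_mul_le_tsum {ι X : Type*} {D : Finset ι} {x : ι → X}
    {𝒰 : Set (Set X)} (hcov : ∀ i ∈ D, x i ∈ ⋃₀ 𝒰) {m : ℝ} (hm : 0 ≤ m) {w : Set X → ℝ}
    (hw : ∀ U ∈ 𝒰, ∀ F ⊆ D, (∀ i ∈ F, x i ∈ U) → (F.card : ℝ) * m ≤ w U) :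
    ENNReal.ofReal (D.card * m) ≤ ∑' U : 𝒰, ENNReal.ofReal (w U) := by
  rcases D.eq_empty_or_nonempty with rfl | ⟨i₀, hi₀⟩
  · simp
  have : Nonempty 𝒰 := by
    obtain ⟨U, hU, -⟩ := hcov i₀ hi₀
    exact ⟨⟨U, hU⟩⟩
  have hcov' : ∀ i ∈ D, ∃ U : 𝒰, x i ∈ (U : Set X) := fun i hi => by
    obtain ⟨U, hU, hxU⟩ := hcov i hi
    exact ⟨⟨U, hU⟩, hxU⟩
  choose! f hf using hcov'
  classical
  calc ENNReal.ofReal (D.card * m)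
      = ∑ U ∈ D.image f, ENNReal.ofReal ((D.filter (f · = U)).card * m) := by
        rw [Finset.card_eq_sum_card_image f D, Nat.cast_sum, Finset.sum_mul,
          ENNReal.ofReal_sum_of_nonneg fun _ _ => by positivity]
    _ ≤ ∑ U ∈ D.image f, ENNReal.ofReal (w U) := by
        refine Finset.sum_le_sum fun U _ => ENNReal.ofReal_le_ofReal ?_
        refine hw U U.2 _ (Finset.filter_subset _ _) fun i hi => ?_
        obtain ⟨hiD, rfl⟩ := Finset.mem_filter.mp hi
        exact hf i hiD
    _ ≤ ∑' U : 𝒰, ENNReal.ofReal (w U) := ENNReal.sum_le_tsum _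

lemma not_hasIntermediateCover {X : Type*} [SeminormedAddCommGroup X] {E : Set X}
    {p θ δ s : ℝ} {n : ℕ} {D : Finset ℕ} (hp : 0 < p)
    (hD : ∀ i ∈ D, 1 ≤ i ∧ i ≤ n ∧ ∃ x ∈ E, ‖x‖ = (i : ℝ) ^ (-p))
    (hs0 : 0 ≤ s) (hs1 : s ≤ 1) (hδ : 0 < δ) (h₁ : 2 < D.card * δ ^ s)
    (h₂ : 2 < D.card * (p * n ^ (-(p + 1))) * δ ^ (θ * (s - 1))) :
    ¬ HasIntermediateCover E θ δ s 1 := by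
  rintro ⟨𝒰, -, hcov, hdiam, hsum⟩
  choose! x hxE hx using fun i hi => (hD i hi).2.2
  set g := p * (n : ℝ) ^ (-(p + 1))
  have hg : 0 < g := (by positivity : 0 ≤ g).lt_of_ne fun hg0 => by
    rw [← hg0, mul_zero, zero_mul] at h₂
    linarith
  -- each `U` of the cover pays at least `m` for every chosen point it contains
  set m := min (δ ^ s) (g * δ ^ (θ * (s - 1))) / 2 with hm_def
  have hm : 0 ≤ m := by positivity
  have hw : ∀ U ∈ 𝒰, ∀ F ⊆ D, (∀ i ∈ F, x i ∈ U) → (F.card : ℝ) * m ≤ diam U ^ s := by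
    intro U hU F hFD hxU
    obtain ⟨hδU, hUδ⟩ := hdiam U hU
    have hU : Bornology.IsBounded U := by
      by_contra hU
      rw [diam_eq_zero_of_unbounded hU] at hδU
      linarith
    refine mul_le_rpow_of_sub_one_mul_le hg hδ hδU hUδ hs0 hs1 hm
      (by rw [hm_def]; linarith [min_le_left (δ ^ s) (g * δ ^ (θ * (s - 1)))])
      (by rw [hm_def]; linarith [min_le_right (δ ^ s) (g * δ ^ (θ * (s - 1)))])
      (card_sub_one_mul_le_diam hU hg.le hxU fun i hi j hj hij => ?_)
    obtain ⟨hi1, -, -⟩ := hD i (hFD hi)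
    obtain ⟨-, hjn, -⟩ := hD j (hFD hj)
    calc ((j : ℝ) - i) * g ≤ (i : ℝ) ^ (-p) - (j : ℝ) ^ (-p) :=
          sub_mul_le_rpow_neg_sub_rpow_neg hp (by exact_mod_cast hi1) (by exact_mod_cast hij)
            (by exact_mod_cast hjn)
      _ = ‖x i‖ - ‖x j‖ := by rw [hx i (hFD hi), hx j (hFD hj)]
      _ ≤ dist (x i) (x j) := by rw [dist_eq_norm]; exact norm_sub_norm_le _ _
  have hle : (D.card : ℝ) * m ≤ 1 := by
    rw [← ENNReal.ofReal_le_ofReal_iff zero_le_one]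
    exact (ofReal_card_mul_le_tsum (fun i hi => hcov (hxE i hi)) hm hw).trans hsum
  have hgt : 2 < min (D.card * δ ^ s) (D.card * (g * δ ^ (θ * (s - 1)))) := by
    rw [← mul_assoc]
    exact lt_min h₁ h₂
  rw [← mul_min_of_nonneg _ _ (Nat.cast_nonneg _),
    show min (δ ^ s) (g * δ ^ (θ * (s - 1))) = 2 * m by rw [hm_def]; ring] at hgt
  linarith

lemma eventually_not_hasIntermediateCover {X : Type*} [SeminormedAddCommGroup X] {E : Set X}
    {P : ℕ → Prop} {p θ s t c : ℝ} (hp : 0 < p)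
    (hP : ∀ i, 1 ≤ i → P i → ∃ x ∈ E, ‖x‖ = (i : ℝ) ^ (-p)) (hθ : 0 < θ) (hs : 0 ≤ s)
    (hst : s < t) (htp : t * p < θ * (1 - s)) (hc : 0 < c) :
    ∀ᶠ δ : ℝ in 𝓝[>] 0, ∀ n : ℕ, δ ^ (-t) ≤ n → (n : ℝ) ≤ 2 * δ ^ (-t) →
      c * n ≤ {i | 1 ≤ i ∧ i ≤ n ∧ P i}.ncard → ¬ HasIntermediateCover E θ δ s 1 := by
  classical
  have hs1 : s ≤ 1 := by nlinarith
  have E₁ : ∀ᶠ δ in 𝓝[>] (0 : ℝ), 2 < c * δ ^ (s - t) :=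
    ((tendsto_rpow_neg_nhdsGT_zero (by linarith)).const_mul_atTop hc).eventually_gt_atTop 2
  have E₂ : ∀ᶠ δ in 𝓝[>] (0 : ℝ), 2 < c * p * 2 ^ (-p) * δ ^ (t * p + θ * (s - 1)) :=
    ((tendsto_rpow_neg_nhdsGT_zero (by linarith)).const_mul_atTop
      (by positivity)).eventually_gt_atTop 2
  filter_upwards [self_mem_nhdsWithin, E₁, E₂] with δ (hδ : 0 < δ) h₁ h₂ n hn₁ hn₂ hdens
  set D := (Finset.Icc 1 n).filter P
  have hD : {i | 1 ≤ i ∧ i ≤ n ∧ P i}.ncard = D.card := by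
    rw [← Set.ncard_coe_finset]
    congr 1
    ext i
    simp [D, and_assoc]
  rw [hD] at hdens
  have hn : (0 : ℝ) < n := (Real.rpow_pos_of_pos hδ _).trans_le hn₁
  refine not_hasIntermediateCover hp (n := n) (D := D) (fun i hi => ?_) hs hs1 hδ ?_ ?_
  · obtain ⟨hi, hPi⟩ := Finset.mem_filter.mp hi
    obtain ⟨hi1, hin⟩ := Finset.mem_Icc.mp hi
    exact ⟨hi1, hin, hP i hi1 hPi⟩
  · calc 2 < c * δ ^ (s - t) := h₁
      _ = c * δ ^ (-t) * δ ^ s := by rw [mul_assoc, ← Real.rpow_add hδ]; ring_nf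
      _ ≤ D.card * δ ^ s := by
          gcongr
          exact (mul_le_mul_of_nonneg_left hn₁ hc.le).trans hdens
  · calc 2 < c * p * 2 ^ (-p) * δ ^ (t * p + θ * (s - 1)) := h₂
      _ = c * p * (2 * δ ^ (-t)) ^ (-p) * δ ^ (θ * (s - 1)) := by
          rw [Real.mul_rpow (by norm_num) (by positivity), ← Real.rpow_mul hδ.le,
            Real.rpow_add hδ]
          ring_nf
      _ ≤ c * p * n ^ (-p) * δ ^ (θ * (s - 1)) := by
          have := Real.rpow_le_rpow_of_nonpos hn hn₂ (neg_nonpos.mpr hp.le)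
          gcongr
      _ = c * n * (p * n ^ (-(p + 1))) * δ ^ (θ * (s - 1)) := by
          rw [show -p = 1 + -(p + 1) by ring, Real.rpow_add hn, Real.rpow_one]
          ring
      _ ≤ D.card * (p * n ^ (-(p + 1))) * δ ^ (θ * (s - 1)) := by gcongr

lemma exists_pos_eventually_mul_le_of_liminf {f : ℕ → ℝ} (hf : ∀ n, 0 ≤ f n)
    (h : 0 < liminf (fun n : ℕ => f n / n) atTop) : ∃ c > 0, ∀ᶠ n : ℕ in atTop, c * n ≤ f n := by
  refine ⟨_, half_pos h, (eventually_lt_of_lt_liminf (half_lt_self h)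
    (isBoundedUnder_of ⟨0, fun n => div_nonneg (hf n) n.cast_nonneg⟩)).mono fun n hn => ?_⟩
  rcases n.eq_zero_or_pos with rfl | hn0
  · simpa using hf 0
  · exact ((lt_div_iff₀ (by exact_mod_cast hn0)).mp hn).le

lemma exists_pos_frequently_mul_le_of_limsup {f : ℕ → ℝ} (hf : ∀ n, 0 ≤ f n)
    (h : 0 < limsup (fun n : ℕ => f n / n) atTop) : ∃ c > 0, ∃ᶠ n : ℕ in atTop, c * n ≤ f n := by
  refine ⟨_, half_pos h, (frequently_lt_of_lt_limsup
    (isBoundedUnder_of ⟨0, fun n => div_nonneg (hf n) n.cast_nonneg⟩).isCoboundedUnder_le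
    (half_lt_self h)).mono fun n hn => ?_⟩
  rcases n.eq_zero_or_pos with rfl | hn0
  · simpa using hf 0
  · exact ((lt_div_iff₀ (by exact_mod_cast hn0)).mp hn).le

lemma eventually_exists_nat_mem_Icc_rpow {Q : ℕ → Prop} {t : ℝ} (ht : 0 < t)
    (hQ : ∀ᶠ n in atTop, Q n) :
    ∀ᶠ δ : ℝ in 𝓝[>] 0, ∃ n : ℕ, δ ^ (-t) ≤ n ∧ (n : ℝ) ≤ 2 * δ ^ (-t) ∧ Q n := by
  have hT := tendsto_rpow_neg_nhdsGT_zero (neg_neg_of_pos ht)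
  filter_upwards [(tendsto_nat_ceil_atTop.comp hT).eventually hQ,
    hT.eventually_ge_atTop 1] with δ hQδ hδ
  exact ⟨_, Nat.le_ceil _, Nat.ceil_le_two_mul (by linarith), hQδ⟩

lemma frequently_exists_nat_mem_Icc_rpow {Q : ℕ → Prop} {t : ℝ} (ht : 0 < t)
    (hQ : ∃ᶠ n in atTop, Q n) :
    ∃ᶠ δ : ℝ in 𝓝[>] 0, ∃ n : ℕ, δ ^ (-t) ≤ n ∧ (n : ℝ) ≤ 2 * δ ^ (-t) ∧ Q n := by
  have hT : Tendsto (fun n : ℕ => (n : ℝ) ^ (-t⁻¹)) atTop (𝓝[>] 0) :=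
    tendsto_nhdsWithin_iff.mpr ⟨(tendsto_rpow_neg_atTop (inv_pos.mpr ht)).comp
      tendsto_natCast_atTop_atTop, (eventually_gt_atTop 0).mono fun n hn => by
        have : (0 : ℝ) < n := by exact_mod_cast hn
        exact Real.rpow_pos_of_pos this _⟩
  refine hT.frequently ((hQ.and_eventually (eventually_gt_atTop 0)).mono fun n ⟨hQn, hn⟩ => ?_)
  have hn : (0 : ℝ) ≤ n := n.cast_nonneg
  have hinv : ((n : ℝ) ^ (-t⁻¹)) ^ (-t) = n := by
    rw [← Real.rpow_mul hn, neg_mul_neg, inv_mul_cancel₀ ht.ne', Real.rpow_one]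
  exact ⟨n, hinv.le, by rw [hinv]; linarith, hQn⟩

lemma exists_lt_and_mul_lt_of_lt_div {p θ s : ℝ} (hp : 0 < p) (hθ : 0 < θ)
    (h : s < θ / (p + θ)) : ∃ t, s < t ∧ t * p < θ * (1 - s) := by
  have hsp : s * p < θ * (1 - s) := by
    rw [lt_div_iff₀ (by positivity)] at h
    linarith
  refine ⟨(s + θ * (1 - s) / p) / 2, ?_, ?_⟩
  · have : s < θ * (1 - s) / p := by rwa [lt_div_iff₀ hp]
    linarith
  · have : (s + θ * (1 - s) / p) / 2 * p = (s * p + θ * (1 - s)) / 2 := by field_simp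
    linarith

theorem stmt12 (d : ℕ) (hd : 2 ≤ d) (p : ℝ) (hp : 0 < p)
    (E : Set (EuclideanSpace ℝ (Fin d))) (hE : E ⊆ concentric d p) (b : ℕ → ℕ)
    (hb : ∀ i : ℕ, 1 ≤ i → (E ∩ {x | ‖x‖ = (i : ℝ) ^ (-p)}).Finite ∧
      (E ∩ {x | ‖x‖ = (i : ℝ) ^ (-p)}).ncard = b i) :
    (0 < liminf (fun n : ℕ =>
        (Set.ncard {i : ℕ | 1 ≤ i ∧ i ≤ n ∧ 0 < b i} : ℝ) / n) atTop →
      ∀ θ : ℝ, 0 < θ → θ ≤ 1 → θ / (p + θ) ≤ lodim θ E) ∧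
    (0 < limsup (fun n : ℕ =>
        (Set.ncard {i : ℕ | 1 ≤ i ∧ i ≤ n ∧ 0 < b i} : ℝ) / n) atTop →
      ∀ θ : ℝ, 0 < θ → θ ≤ 1 → θ / (p + θ) ≤ updim θ E) := by
  have hP : ∀ i, 1 ≤ i → 0 < b i → ∃ x ∈ E, ‖x‖ = (i : ℝ) ^ (-p) := fun i hi hbi =>
    Set.nonempty_of_ncard_ne_zero (((hb i hi).2).trans_ne hbi.ne')
  have hcover : ∀ θ ≤ 1, ∃ s₀, 0 ≤ s₀ ∧ ∀ ε > 0, ∀ᶠ δ in 𝓝[>] 0,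
      HasIntermediateCover E θ δ s₀ ε := fun θ hθ =>
    ⟨d + 1, by positivity, fun ε hε => (eventually_hasIntermediateCover_closedBall
      (by omega) hθ hε).mono fun _ h => h.mono (hE.trans (concentric_subset_closedBall d hp))⟩
  refine ⟨fun hdens θ hθ hθ1 => le_lodim (hcover θ hθ1) fun s hs hsθ => ?_,
    fun hdens θ hθ hθ1 => le_updim (hcover θ hθ1) fun s hs hsθ => ?_⟩
  · obtain ⟨t, hst, htp⟩ := exists_lt_and_mul_lt_of_lt_div hp hθ hsθ
    obtain ⟨c, hc, hcn⟩ := exists_pos_eventually_mul_le_of_liminf (fun n => by positivity) hdens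
    filter_upwards [eventually_not_hasIntermediateCover hp hP hθ hs hst htp hc,
      eventually_exists_nat_mem_Icc_rpow (hs.trans_lt hst) hcn] with δ hδ ⟨n, hn₁, hn₂, hn⟩
    exact hδ n hn₁ hn₂ hn
  · obtain ⟨t, hst, htp⟩ := exists_lt_and_mul_lt_of_lt_div hp hθ hsθ
    obtain ⟨c, hc, hcn⟩ := exists_pos_frequently_mul_le_of_limsup (fun n => by positivity) hdens
    refine (frequently_exists_nat_mem_Icc_rpow (hs.trans_lt hst) hcn).mp ?_
    filter_upwards [eventually_not_hasIntermediateCover hp hP hθ hs hst htp hc]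
      with δ hδ ⟨n, hn₁, hn₂, hn⟩
    exact hδ n hn₁ hn₂ hn
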